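/- arXiv:2006.02829 — 3 statements merged into one kernel-verified Lean document; each statement's English description precedes it below -/
import Mathlib

section
/- If G is a finite simple graph of order n with no isolated vertex and maximum degree Δ, then the upper domination number satisfies Γ(G) ≤ Δn/(Δ+1); equivalently, (Δ+1)·Γ(G) ≤ Δ·n. -/
namespace EnclavelessGame

variable {V : Type*} [Fintype V] [DecidableEq V]

/-- `v` is an enclave of `S` if `v ∈ S` and its closed neighborhood `N[v]` is contained in `S`. -/
def IsEnclave (G : SimpleGraph V) (S : Finset V) (v : V) : Prop :=
  v ∈ S ∧ ∀ u, G.Adj v u → u ∈ S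

/-- `S` is enclaveless if it contains no enclave. -/
def IsEnclaveless (G : SimpleGraph V) (S : Finset V) : Prop :=
  ∀ v, ¬ IsEnclave G S v

instance (G : SimpleGraph V) [DecidableRel G.Adj] (S : Finset V) :
    Decidable (IsEnclaveless G S) := by
  unfold IsEnclaveless IsEnclave
  infer_instance

/-- `D` is a dominating set: every vertex lies in the closed neighborhood
of some vertex of `D`. -/
def IsDominating (G : SimpleGraph V) (D : Finset V) : Prop :=
  ∀ v, ∃ u ∈ D, u = v ∨ G.Adj u v

/-- `D` is a minimal dominating set (minimal with respect to set inclusion). -/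
def IsMinimalDominating (G : SimpleGraph V) (D : Finset V) : Prop :=
  IsDominating G D ∧ ∀ D' ⊆ D, IsDominating G D' → D' = D

/-- `S` is a maximal enclaveless set (maximal with respect to set inclusion). -/
def IsMaximalEnclaveless (G : SimpleGraph V) (S : Finset V) : Prop :=
  IsEnclaveless G S ∧ ∀ T, S ⊆ T → IsEnclaveless G T → T = S

/-- The domination number `γ(G)`: minimum cardinality of a dominating set. -/
noncomputable def domNum (G : SimpleGraph V) : ℕ :=
  sInf {k | ∃ D : Finset V, IsDominating G D ∧ D.card = k}

/-- The upper domination number `Γ(G)`: maximum cardinality of a minimal dominating set. -/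
noncomputable def upperDomNum (G : SimpleGraph V) : ℕ :=
  sSup {k | ∃ D : Finset V, IsMinimalDominating G D ∧ D.card = k}

/-- The enclaveless number `Ψ(G)`: maximum cardinality of an enclaveless set. -/
noncomputable def enclavelessNum (G : SimpleGraph V) : ℕ :=
  sSup {k | ∃ S : Finset V, IsEnclaveless G S ∧ S.card = k}

/-- The lower enclaveless number `ψ(G)`: minimum cardinality of a maximal enclaveless set. -/
noncomputable def lowerEnclavelessNum (G : SimpleGraph V) : ℕ :=
  sInf {k | ∃ S : Finset V, IsMaximalEnclaveless G S ∧ S.card = k}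

end EnclavelessGame

namespace EnclavelessGame

variable {V : Type*} {G : SimpleGraph V}

lemma IsDominating.card_le_mul_card [Fintype V] [DecidableEq V] [DecidableRel G.Adj]
    {D : Finset V} (hD : IsDominating G D) :
    Fintype.card V ≤ (G.maxDegree + 1) * D.card := by
  have hcover : Finset.univ ⊆ D.biUnion fun u => insert u (G.neighborFinset u) := by
    intro v _
    obtain ⟨u, hu, huv⟩ := hD v
    refine Finset.mem_biUnion.2 ⟨u, hu, ?_⟩
    rcases huv with rfl | hadj
    · exact Finset.mem_insert_self _ _
    · exact Finset.mem_insert_of_mem ((G.mem_neighborFinset u v).2 hadj)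
  calc Fintype.card V ≤ (D.biUnion fun u => insert u (G.neighborFinset u)).card :=
        Finset.card_le_card hcover
    _ ≤ D.card * (G.maxDegree + 1) :=
        Finset.card_biUnion_le_card_mul _ _ _ fun u _ =>
          (Finset.card_insert_le _ _).trans
            (by simpa using G.degree_le_maxDegree u)
    _ = (G.maxDegree + 1) * D.card := Nat.mul_comm _ _

lemma IsDominating.erase_of_isEnclave [DecidableEq V] {D : Finset V} {v : V}
    (hD : IsDominating G D) (hv : IsEnclave G D v) (hnbr : ∃ u, G.Adj v u) :
    IsDominating G (D.erase v) := by
  intro w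
  obtain ⟨u, hu, huw⟩ := hD w
  by_cases huv : u = v
  · subst huv
    rcases huw with rfl | hadj
    · obtain ⟨x, hx⟩ := hnbr
      exact ⟨x, Finset.mem_erase.2 ⟨hx.ne', hv.2 x hx⟩, Or.inr hx.symm⟩
    · exact ⟨w, Finset.mem_erase.2 ⟨hadj.ne', hv.2 w hadj⟩, Or.inl rfl⟩
  · exact ⟨u, Finset.mem_erase.2 ⟨huv, hu⟩, huw⟩

lemma IsMinimalDominating.isEnclaveless [DecidableEq V] {D : Finset V}
    (hD : IsMinimalDominating G D) (hiso : ∀ v, ∃ u, G.Adj v u) :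
    IsEnclaveless G D := fun v hv =>
  Finset.notMem_erase v D <| by
    rw [hD.2 _ (Finset.erase_subset v D) (hD.1.erase_of_isEnclave hv (hiso v))]
    exact hv.1

lemma IsEnclaveless.compl_isDominating [Fintype V] [DecidableEq V] {S : Finset V}
    (hS : IsEnclaveless G S) :
    IsDominating G Sᶜ := by
  intro v
  by_cases hv : v ∈ S
  · obtain ⟨u, hadj, hu⟩ : ∃ u, G.Adj v u ∧ u ∉ S := by
      by_contra! h
      exact hS v ⟨hv, h⟩
    exact ⟨u, Finset.mem_compl.2 hu, Or.inr hadj.symm⟩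
  · exact ⟨v, Finset.mem_compl.2 hv, Or.inl rfl⟩

/-- Both `D` and `Dᶜ` dominate (Ore), so `n ≤ (Δ + 1) |Dᶜ| = (Δ + 1) (n - |D|)`. -/
lemma IsMinimalDominating.mul_card_le [Fintype V] [DecidableEq V] [DecidableRel G.Adj]
    {D : Finset V} (hD : IsMinimalDominating G D) (hiso : ∀ v, ∃ u, G.Adj v u) :
    (G.maxDegree + 1) * D.card ≤ G.maxDegree * Fintype.card V := by
  have hcompl := (hD.isEnclaveless hiso).compl_isDominating.card_le_mul_card
  have hsplit : D.card + Dᶜ.card = Fintype.card V := Finset.card_add_card_compl D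
  nlinarith

lemma exists_isMinimalDominating [Fintype V] (G : SimpleGraph V) :
    ∃ D, IsMinimalDominating G D := by
  obtain ⟨D, hDdom, hDmin⟩ := exists_minimal_of_wellFoundedLT (IsDominating G)
    ⟨Finset.univ, fun v => ⟨v, Finset.mem_univ v, Or.inl rfl⟩⟩
  exact ⟨D, hDdom, fun D' hsub hD' => le_antisymm hsub (hDmin hD' hsub)⟩

lemma exists_isMinimalDominating_card_eq_upperDomNum [Fintype V] (G : SimpleGraph V) :
    ∃ D, IsMinimalDominating G D ∧ D.card = upperDomNum G := by
  obtain ⟨D, hD⟩ := exists_isMinimalDominating G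
  exact Nat.sSup_mem (s := {k | ∃ D : Finset V, IsMinimalDominating G D ∧ D.card = k})
    ⟨_, D, hD, rfl⟩
    ⟨Fintype.card V, by rintro _ ⟨D', -, rfl⟩; exact Finset.card_le_univ D'⟩

/-- If `G` is an isolate-free finite simple graph of order `n` with maximum degree `Δ`,
then `Γ(G) ≤ Δn/(Δ+1)`, i.e. `(Δ+1)·Γ(G) ≤ Δ·n`. -/
theorem upperDomNum_le {V : Type*} [Fintype V] [DecidableEq V]
    (G : SimpleGraph V) [DecidableRel G.Adj]
    (hiso : ∀ v : V, ∃ u, G.Adj v u) :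
    (G.maxDegree + 1) * upperDomNum G ≤ G.maxDegree * Fintype.card V := by
  obtain ⟨D, hD, hcard⟩ := exists_isMinimalDominating_card_eq_upperDomNum G
  exact hcard ▸ hD.mul_card_le hiso

end EnclavelessGame
end

section
/- If G is a finite simple graph of order n with no isolated vertex and maximum degree Δ, then n/(Δ+1) ≤ Ψ⁻_g(G) ≤ Δn/(Δ+1) and n/(Δ+1) ≤ Ψ⁺_g(G) ≤ Δn/(Δ+1); equivalently, n ≤ (Δ+1)·Ψ⁻_g(G) ≤ Δ·n and n ≤ (Δ+1)·Ψ⁺_g(G) ≤ Δ·n. -/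
namespace EnclavelessGame

variable {V : Type*} [Fintype V] [DecidableEq V]

/-- The set of playable vertices given the set `S` of already chosen vertices:
vertices `v ∉ S` such that `S ∪ {v}` is enclaveless. -/
def playableSet (G : SimpleGraph V) [DecidableRel G.Adj] (S : Finset V) : Finset V :=
  Finset.univ.filter (fun v => v ∉ S ∧ IsEnclaveless G (insert v S))

/-- The value of the competition-enclaveless game from position `S`: `maxTurn = true`
means it is Maximizer's turn (this computes `MaxVal S`), and `maxTurn = false` means it
is Minimizer's turn (this computes `MinVal S`). If no vertex is playable the value is
`|S|`; otherwise it is the max (resp. min) over playable `v` of the value of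
`S ∪ {v}` with the turn switched. -/
def gameVal (G : SimpleGraph V) [DecidableRel G.Adj] (maxTurn : Bool) (S : Finset V) : ℕ :=
  if h : (playableSet G S).Nonempty then
    if maxTurn then
      (playableSet G S).attach.sup' (by simpa using h)
        (fun v => gameVal G false (insert v.1 S))
    else
      (playableSet G S).attach.inf' (by simpa using h)
        (fun v => gameVal G true (insert v.1 S))
  else S.card
termination_by Sᶜ.card
decreasing_by
  all_goals
    have hv := v.2
    simp only [playableSet, Finset.mem_filter] at hv
    rw [Finset.compl_insert]
    exact Finset.card_erase_lt_of_mem (Finset.mem_compl.mpr hv.2.1)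

/-- The Maximizer-start enclaveless game number `Ψ⁺_g(G) = MaxVal ∅`. -/
def maxStartGameNum (G : SimpleGraph V) [DecidableRel G.Adj] : ℕ := gameVal G true ∅

/-- The Minimizer-start enclaveless game number `Ψ⁻_g(G) = MinVal ∅`. -/
def minStartGameNum (G : SimpleGraph V) [DecidableRel G.Adj] : ℕ := gameVal G false ∅


end EnclavelessGame

/-! Every play ends in a maximal enclaveless set `T`. Without isolated vertices `T` dominates `G`,
and as `T` has no enclave its complement dominates `G` too. A dominating set `D` satisfies
`n ≤ (Δ + 1)|D|`, which applied to `T` and to `Tᶜ` gives the two bounds. -/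

namespace EnclavelessGame

open Finset

variable {V : Type*}

theorem IsEnclaveless.mono {G : SimpleGraph V} {S T : Finset V} (hT : IsEnclaveless G T)
    (hST : S ⊆ T) : IsEnclaveless G S :=
  fun v ⟨hv, hN⟩ => hT v ⟨hST hv, fun u hu => hST (hN u hu)⟩

variable [DecidableEq V]

theorem IsMaximalEnclaveless.isDominating {G : SimpleGraph V} {S : Finset V}
    (hS : IsMaximalEnclaveless G S) (hiso : ∀ v, ∃ u, G.Adj v u) : IsDominating G S := by
  intro v
  by_cases hv : v ∈ S
  · exact ⟨v, hv, Or.inl rfl⟩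
  have hnot : ¬ IsEnclaveless G (insert v S) := fun h =>
    hv (hS.2 _ (subset_insert v S) h ▸ mem_insert_self v S)
  obtain ⟨w, hw, hNw⟩ : ∃ w, w ∈ insert v S ∧ ∀ u, G.Adj w u → u ∈ insert v S := by
    by_contra! h
    exact hnot fun w ⟨hw, hN⟩ => by
      obtain ⟨u, hu, hu'⟩ := h w hw
      exact hu' (hN u hu)
  rcases mem_insert.mp hw with rfl | hwS
  · -- `w = v` is an enclave of `insert w S`, so any neighbour of `w` lies in `S`
    obtain ⟨u, hwu⟩ := hiso w
    have hu : u ∈ S := (mem_insert.mp (hNw u hwu)).resolve_left hwu.ne'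
    exact ⟨u, hu, Or.inr hwu.symm⟩
  · -- `w` is no enclave of `S`, so it has a neighbour outside `S`, which must be `v`
    obtain ⟨u, hwu, hu⟩ : ∃ u, G.Adj w u ∧ u ∉ S := by
      by_contra! h
      exact hS.1 w ⟨hwS, h⟩
    obtain rfl := (mem_insert.mp (hNw u hwu)).resolve_right hu
    exact ⟨w, hwS, Or.inr hwu⟩

variable [Fintype V]

theorem IsEnclaveless.isDominating_compl {G : SimpleGraph V} {S : Finset V}
    (hS : IsEnclaveless G S) : IsDominating G Sᶜ := by
  intro v
  by_cases hv : v ∈ S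
  · obtain ⟨u, hvu, hu⟩ : ∃ u, G.Adj v u ∧ u ∉ S := by
      by_contra! h
      exact hS v ⟨hv, h⟩
    exact ⟨u, mem_compl.mpr hu, Or.inr hvu.symm⟩
  · exact ⟨v, mem_compl.mpr hv, Or.inl rfl⟩

variable (G : SimpleGraph V) [DecidableRel G.Adj]

theorem card_le_mul_card_of_isDominating {D : Finset V} (hD : IsDominating G D) :
    Fintype.card V ≤ (G.maxDegree + 1) * D.card := by
  have hcover : univ ⊆ D.biUnion fun d => insert d (G.neighborFinset d) := by
    intro v _
    obtain ⟨u, hu, rfl | huv⟩ := hD v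
    · exact mem_biUnion.mpr ⟨u, hu, mem_insert_self _ _⟩
    · exact mem_biUnion.mpr ⟨u, hu, by simp [huv]⟩
  calc Fintype.card V ≤ (D.biUnion fun d => insert d (G.neighborFinset d)).card :=
        card_le_card hcover
    _ ≤ D.card * (G.maxDegree + 1) := by
        refine card_biUnion_le_card_mul _ _ _ fun d _ => ?_
        calc (insert d (G.neighborFinset d)).card ≤ G.degree d + 1 := card_insert_le _ _
          _ ≤ G.maxDegree + 1 := Nat.succ_le_succ (G.degree_le_maxDegree d)
    _ = (G.maxDegree + 1) * D.card := Nat.mul_comm _ _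

theorem mul_card_le_of_isEnclaveless {S : Finset V} (hS : IsEnclaveless G S) :
    (G.maxDegree + 1) * S.card ≤ G.maxDegree * Fintype.card V := by
  have hcompl := card_le_mul_card_of_isDominating G hS.isDominating_compl
  rw [card_compl] at hcompl
  obtain ⟨k, hk⟩ := Nat.exists_eq_add_of_le (card_le_univ S)
  rw [hk, Nat.add_sub_cancel_left] at hcompl
  rw [hk]
  nlinarith

@[simp]
theorem mem_playableSet {S : Finset V} {v : V} :
    v ∈ playableSet G S ↔ v ∉ S ∧ IsEnclaveless G (insert v S) := by
  simp [playableSet]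

theorem isMaximalEnclaveless_of_playableSet_eq_empty {S : Finset V} (hS : IsEnclaveless G S)
    (hp : playableSet G S = ∅) : IsMaximalEnclaveless G S := by
  refine ⟨hS, fun T hST hT => ?_⟩
  by_contra hne
  obtain ⟨v, hvT, hvS⟩ := exists_of_ssubset (hST.ssubset_of_ne (Ne.symm hne))
  have hv : v ∈ playableSet G S :=
    (mem_playableSet G).mpr ⟨hvS, hT.mono (insert_subset hvT hST)⟩
  simp [hp] at hv

theorem gameVal_of_playableSet_eq_empty (b : Bool) {S : Finset V} (hp : playableSet G S = ∅) :
    gameVal G b S = S.card := by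
  rw [gameVal, dif_neg (not_nonempty_iff_eq_empty.mpr hp)]

theorem exists_mem_playableSet_gameVal_eq (b : Bool) {S : Finset V}
    (hp : (playableSet G S).Nonempty) :
    ∃ v ∈ playableSet G S, gameVal G b S = gameVal G (!b) (insert v S) := by
  have hp' : (playableSet G S).attach.Nonempty := by simpa using hp
  rw [gameVal, dif_pos hp]
  cases b
  · obtain ⟨v, _, hv⟩ := exists_mem_eq_inf' hp' fun v => gameVal G true (insert v.1 S)
    exact ⟨v, v.2, by simpa using hv⟩
  · obtain ⟨v, _, hv⟩ := exists_mem_eq_sup' hp' fun v => gameVal G false (insert v.1 S)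
    exact ⟨v, v.2, by simpa using hv⟩

theorem exists_isMaximalEnclaveless_gameVal_eq (b : Bool) {S : Finset V}
    (hS : IsEnclaveless G S) :
    ∃ T, IsMaximalEnclaveless G T ∧ gameVal G b S = T.card := by
  by_cases hp : (playableSet G S).Nonempty
  · obtain ⟨v, hv, hval⟩ := exists_mem_playableSet_gameVal_eq G b hp
    have hv' := (mem_playableSet G).mp hv
    obtain ⟨T, hT, hvalT⟩ := exists_isMaximalEnclaveless_gameVal_eq (!b) hv'.2
    exact ⟨T, hT, hval.trans hvalT⟩
  · have hp : playableSet G S = ∅ := not_nonempty_iff_eq_empty.mp hp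
    exact ⟨S, isMaximalEnclaveless_of_playableSet_eq_empty G hS hp,
      gameVal_of_playableSet_eq_empty G b hp⟩
termination_by Sᶜ.card
decreasing_by
  rw [compl_insert]
  exact card_erase_lt_of_mem (mem_compl.mpr hv'.1)

theorem gameVal_empty_bounds (hiso : ∀ v, ∃ u, G.Adj v u) (b : Bool) :
    Fintype.card V ≤ (G.maxDegree + 1) * gameVal G b ∅ ∧
      (G.maxDegree + 1) * gameVal G b ∅ ≤ G.maxDegree * Fintype.card V := by
  have hempty : IsEnclaveless G (∅ : Finset V) := fun v hv => notMem_empty v hv.1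
  obtain ⟨T, hT, hval⟩ := exists_isMaximalEnclaveless_gameVal_eq G b hempty
  rw [hval]
  exact ⟨card_le_mul_card_of_isDominating G (hT.isDominating hiso),
    mul_card_le_of_isEnclaveless G hT.1⟩

/-- If `G` is an isolate-free finite simple graph of order `n` with maximum degree `Δ`,
then `n/(Δ+1) ≤ Ψ⁻_g(G) ≤ Δn/(Δ+1)` and `n/(Δ+1) ≤ Ψ⁺_g(G) ≤ Δn/(Δ+1)`, i.e.
`n ≤ (Δ+1)·Ψ⁻_g(G) ≤ Δ·n` and `n ≤ (Δ+1)·Ψ⁺_g(G) ≤ Δ·n`. -/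
theorem gameNums_bounds {V : Type*} [Fintype V] [DecidableEq V]
    (G : SimpleGraph V) [DecidableRel G.Adj]
    (hiso : ∀ v : V, ∃ u, G.Adj v u) :
    (Fintype.card V ≤ (G.maxDegree + 1) * minStartGameNum G ∧
      (G.maxDegree + 1) * minStartGameNum G ≤ G.maxDegree * Fintype.card V) ∧
    (Fintype.card V ≤ (G.maxDegree + 1) * maxStartGameNum G ∧
      (G.maxDegree + 1) * maxStartGameNum G ≤ G.maxDegree * Fintype.card V) :=
  ⟨gameVal_empty_bounds G hiso false, gameVal_empty_bounds G hiso true⟩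

end EnclavelessGame
end

section
/- If G is a connected claw-free finite simple graph of order n with minimum degree at least 2, then the upper irredundance number satisfies IR(G) ≤ n/2, i.e., 2·IR(G) ≤ n. -/
/-!
Let `S` be irredundant, `A ⊆ S` the vertices with no neighbour in `S` and `B = S \ A`. A vertex
of `B` is not its own private neighbour, so it has one outside `S`, and distinct vertices have
distinct private neighbours; this gives `|B|` vertices `P` outside `S`. The vertices of `A` are
pairwise non-adjacent and have all their neighbours in `X = V \ (S ∪ P)`. Each vertex of `X` sees at
most two of them (claw-freeness) while each of them has at least two neighbours, so `|A| ≤ |X|`, and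
`n = |S| + |P| + |X| ≥ (|A| + |B|) + |B| + |A| = 2|S|`.
-/

namespace EnclavelessGame

variable {V : Type*} [Fintype V] [DecidableEq V]

/-- `S` is irredundant: every `v ∈ S` has an `S`-private neighbor, i.e. a vertex `w`
with `N[w] ∩ S = {v}`. -/
def IsIrredundant (G : SimpleGraph V) (S : Finset V) : Prop :=
  ∀ v ∈ S, ∃ w, (w = v ∨ G.Adj w v) ∧ ∀ u ∈ S, (u = w ∨ G.Adj u w) → u = v

/-- The upper irredundance number `IR(G)`: maximum cardinality of an irredundant set. -/
noncomputable def irNum (G : SimpleGraph V) : ℕ :=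
  sSup {k | ∃ S : Finset V, IsIrredundant G S ∧ S.card = k}

/-- `G` is claw-free: it contains no induced `K_{1,3}`, i.e. no vertex has three
pairwise non-adjacent neighbors. -/
def ClawFree (G : SimpleGraph V) : Prop :=
  ¬ ∃ (v : V) (T : Finset V), T.card = 3 ∧ (∀ u ∈ T, G.Adj v u) ∧
      ∀ a ∈ T, ∀ b ∈ T, a ≠ b → ¬ G.Adj a b


open Finset

variable {G : SimpleGraph V}

theorem ClawFree.card_filter_adj_le_two [DecidableRel G.Adj] (hclaw : ClawFree G) {A : Finset V}
    (hA : G.IsIndepSet (A : Set V)) (x : V) : #{a ∈ A | G.Adj a x} ≤ 2 := by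
  by_contra! h
  obtain ⟨T, hTA, hT⟩ := exists_subset_card_eq (Nat.succ_le_of_lt h)
  refine hclaw ⟨x, T, hT, fun u hu => (mem_filter.mp (hTA hu)).2.symm, fun a ha b hb hab => ?_⟩
  exact hA (mem_filter.mp (hTA ha)).1 (mem_filter.mp (hTA hb)).1 hab

theorem ClawFree.card_le_card_of_isIndepSet [DecidableRel G.Adj] (hclaw : ClawFree G)
    {A X : Finset V} (hA : G.IsIndepSet (A : Set V)) (hdeg : ∀ a ∈ A, 2 ≤ G.degree a)
    (hX : ∀ a ∈ A, G.neighborFinset a ⊆ X) : #A ≤ #X := by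
  have hcount : #A * 2 ≤ #X * 2 := by
    refine card_mul_le_card_mul G.Adj (fun a ha => ?_) (fun x _ => hclaw.card_filter_adj_le_two hA x)
    have hfilter : X.bipartiteAbove G.Adj a = G.neighborFinset a := by
      ext w
      simp only [bipartiteAbove, mem_filter, SimpleGraph.mem_neighborFinset, and_iff_right_iff_imp]
      exact fun haw => hX a ha ((G.mem_neighborFinset a w).mpr haw)
    rw [hfilter, G.card_neighborFinset_eq_degree]
    exact hdeg a ha
  omega

theorem IsIrredundant.exists_private_notMem {S : Finset V} (hS : IsIrredundant G S) {u v : V}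
    (hv : v ∈ S) (hu : u ∈ S) (huv : G.Adj u v) :
    ∃ w ∉ S, G.Adj w v ∧ ∀ u ∈ S, G.Adj u w → u = v := by
  obtain ⟨w, hwv, hpriv⟩ := hS v hv
  have hwS : w ∉ S := by
    intro hwS
    obtain rfl : w = v := hpriv w hwS (Or.inl rfl)
    obtain rfl : u = w := hpriv u hu (Or.inr huv)
    exact G.loopless.irrefl u huv
  refine ⟨w, hwS, hwv.resolve_left (by rintro rfl; exact hwS hv), fun u hu huw => ?_⟩
  exact hpriv u hu (Or.inr huw)

theorem IsIrredundant.exists_private_neighbors [DecidableRel G.Adj] {S : Finset V}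
    (hS : IsIrredundant G S) :
    ∃ P : Finset V, Disjoint S P ∧ #P = #{v ∈ S | ∃ u ∈ S, G.Adj u v} ∧
      ∀ w ∈ P, ∀ v ∈ S, G.Adj v w → ∃ u ∈ S, G.Adj u v := by
  set B := S.filter fun v => ∃ u ∈ S, G.Adj u v
  have hprivate : ∀ v ∈ B, ∃ w ∉ S, G.Adj w v ∧ ∀ u ∈ S, G.Adj u w → u = v := by
    intro v hvB
    obtain ⟨hvS, u, hu, huv⟩ := mem_filter.mp hvB
    exact hS.exists_private_notMem hvS hu huv
  choose! p hp using hprivate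
  have hp_inj : Set.InjOn p B := fun b hb b' hb' hbb' =>
    ((hp b hb).2.2 b' (filter_subset _ S hb') (hbb' ▸ (hp b' hb').2.1.symm)).symm
  refine ⟨B.image p, ?_, card_image_of_injOn hp_inj, ?_⟩
  · simp only [disjoint_right, mem_image]
    rintro _ ⟨b, hb, rfl⟩
    exact (hp b hb).1
  · simp only [mem_image]
    rintro _ ⟨b, hb, rfl⟩ v hv hvb
    obtain rfl : v = b := (hp b hb).2.2 v hv hvb
    exact (mem_filter.mp hb).2

theorem IsIrredundant.two_mul_card_le [DecidableRel G.Adj] (hclaw : ClawFree G)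
    (hdeg : ∀ v, 2 ≤ G.degree v) {S : Finset V} (hS : IsIrredundant G S) :
    2 * #S ≤ Fintype.card V := by
  obtain ⟨P, hSP, hcardP, hP⟩ := hS.exists_private_neighbors
  set A := S.filter fun v => ¬∃ u ∈ S, G.Adj u v
  have hA : G.IsIndepSet (A : Set V) := fun a ha _ ha' _ haa' =>
    (mem_filter.mp ha').2 ⟨a, (mem_filter.mp ha).1, haa'⟩
  have hAX : ∀ a ∈ A, G.neighborFinset a ⊆ univ \ (S ∪ P) := by
    intro a ha w haw
    rw [SimpleGraph.mem_neighborFinset] at haw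
    obtain ⟨haS, ha_isolated⟩ := mem_filter.mp ha
    simp only [mem_sdiff, mem_univ, mem_union, true_and, not_or]
    exact ⟨fun hwS => ha_isolated ⟨w, hwS, haw.symm⟩, fun hwP => ha_isolated (hP w hwP a haS haw)⟩
  have hcardA := hclaw.card_le_card_of_isIndepSet hA (fun a _ => hdeg a) hAX
  have hcardSP : #(S ∪ P) = #S + #P := card_union_of_disjoint hSP
  have hcardX : #(univ \ (S ∪ P)) + #(S ∪ P) = Fintype.card V :=
    card_sdiff_add_card_eq_card (subset_univ _)
  have hcardS : #{v ∈ S | ∃ u ∈ S, G.Adj u v} + #A = #S :=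
    card_filter_add_card_filter_not _
  omega

theorem two_mul_irNum_le {m : ℕ} (h : ∀ S : Finset V, IsIrredundant G S → 2 * #S ≤ m) :
    2 * irNum G ≤ m := by
  have hempty : IsIrredundant G ∅ := fun v hv => absurd hv (notMem_empty v)
  have : irNum G ≤ m / 2 := csSup_le ⟨0, ∅, hempty, rfl⟩ fun _ ⟨S, hS, hk⟩ => by
    have := h S hS
    omega
  omega

theorem clawFree_minDegreeTwo_irNum_le_general {V : Type*} [Fintype V] [DecidableEq V]
    (G : SimpleGraph V) [DecidableRel G.Adj]
    (hclaw : ClawFree G) (hdeg : 2 ≤ G.minDegree) :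
    2 * irNum G ≤ Fintype.card V :=
  two_mul_irNum_le fun _ hS =>
    hS.two_mul_card_le hclaw (fun v => hdeg.trans (G.minDegree_le_degree v))

/-- If `G` is a connected claw-free finite simple graph of order `n` with minimum degree
at least `2`, then `IR(G) ≤ n/2`, i.e. `2·IR(G) ≤ n`. -/
theorem clawFree_minDegreeTwo_irNum_le {V : Type*} [Fintype V] [DecidableEq V]
    (G : SimpleGraph V) [DecidableRel G.Adj]
    (hconn : G.Connected) (hclaw : ClawFree G) (hdeg : 2 ≤ G.minDegree) :
    2 * irNum G ≤ Fintype.card V :=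
  clawFree_minDegreeTwo_irNum_le_general G hclaw hdeg

end EnclavelessGame
end
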